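/- arXiv:math/0602086 — 3 statements merged into one kernel-verified Lean document; each statement's English description precedes it below -/
import Mathlib

section
/- Every null sequence (aₙ) of compact operators on a Hilbert space admits a factorization aₙ = bₙ c where c is a fixed compact operator and (bₙ) is a sequence of compact operators converging to 0 in norm. -/
/-!
Choose finite-dimensional subspaces `W₀ ≤ W₁ ≤ ⋯` with `‖aₙ ∘ e_k‖ ≤ 4⁻ᵏ` for all `n`, where
`e_k` is the orthogonal projection onto `W_kᗮ`: finitely many `aₙ` are handled by compactness,
the others are already small. Then `c = ∑ 2⁻ᵏ⁻¹ (1 - e_k) = 1 - ∑ 2⁻ᵏ⁻¹ e_k` is compact, and its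
truncations `1 - ∑_{j<k} 2⁻ʲ⁻¹ e_j` have the explicit inverses `1 + ∑_{j<k} 2ʲ e_j`, since the
`e_k` form a decreasing chain of idempotents. Multiplying `aₙ` by these inverses converges to
`bₙ = aₙ + ∑ 2ᵏ aₙ e_k`, because `‖2ᵏ aₙ e_k‖ ≤ 2⁻ᵏ`; so `aₙ = bₙ c`, and `bₙ → 0` by dominated
convergence.
-/

open Filter Topology Finset

lemma IsCompactOperator.of_hasSum {𝕜 E F ι : Type*} [NontriviallyNormedField 𝕜]
    [NormedAddCommGroup E] [NormedSpace 𝕜 E] [NormedAddCommGroup F] [NormedSpace 𝕜 F]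
    [CompleteSpace F] {f : ι → E →L[𝕜] F} {g : E →L[𝕜] F} (hf : HasSum f g)
    (h : ∀ i, IsCompactOperator (f i)) : IsCompactOperator g :=
  isCompactOperator_of_tendsto hf <| .of_forall fun _ =>
    (compactOperator (RingHom.id 𝕜) E F).sum_mem fun i _ => h i

section Factorization

variable {𝕜 A : Type*} [RCLike 𝕜] [NormedRing A] [NormedAlgebra 𝕜 A] {e : ℕ → A}

lemma one_add_sum_two_pow_smul_mul_of_le (he : ∀ ⦃i k⦄, i ≤ k → e i * e k = e k)
    {k m : ℕ} (hkm : k ≤ m) :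
    (1 + ∑ j ∈ range k, (2 : 𝕜) ^ j • e j) * e m = (2 : 𝕜) ^ k • e m := by
  induction k with
  | zero => simp
  | succ k ih =>
    rw [sum_range_succ, ← add_assoc, add_mul, ih (by omega), smul_mul_assoc, he (by omega),
      ← add_smul, pow_succ, mul_two]

lemma mul_one_sub_sum_two_inv_pow_smul_of_le (he : ∀ ⦃i k⦄, i ≤ k → e k * e i = e k)
    {k m : ℕ} (hkm : k ≤ m) :
    e m * (1 - ∑ j ∈ range k, (2⁻¹ : 𝕜) ^ (j + 1) • e j) = (2⁻¹ : 𝕜) ^ k • e m := by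
  induction k with
  | zero => simp
  | succ k ih =>
    rw [sum_range_succ, ← sub_sub, mul_sub, ih (by omega), mul_smul_comm, he (by omega),
      ← sub_smul]
    congr 1
    ring

lemma one_add_sum_two_pow_smul_mul_one_sub_sum_two_inv_pow_smul
    (he₁ : ∀ ⦃i k⦄, i ≤ k → e i * e k = e k) (he₂ : ∀ ⦃i k⦄, i ≤ k → e k * e i = e k) (k : ℕ) :
    (1 + ∑ j ∈ range k, (2 : 𝕜) ^ j • e j) *
      (1 - ∑ j ∈ range k, (2⁻¹ : 𝕜) ^ (j + 1) • e j) = 1 := by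
  induction k with
  | zero => simp
  | succ k ih =>
    rw [sum_range_succ, sum_range_succ, ← add_assoc, ← sub_sub]
    set L := 1 + ∑ j ∈ range k, (2 : 𝕜) ^ j • e j
    set R := 1 - ∑ j ∈ range k, (2⁻¹ : 𝕜) ^ (j + 1) • e j
    have hLe : L * e k = (2 : 𝕜) ^ k • e k := one_add_sum_two_pow_smul_mul_of_le he₁ le_rfl
    have heR : e k * R = (2⁻¹ : 𝕜) ^ k • e k := mul_one_sub_sum_two_inv_pow_smul_of_le he₂ le_rfl
    rw [add_mul, mul_sub L R, mul_sub _ R, ih, mul_smul_comm, hLe, smul_mul_assoc, heR,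
      smul_mul_smul_comm, he₁ le_rfl]
    match_scalars <;> ring

theorem exists_mul_eq_of_norm_mul_le_four_inv_pow [CompleteSpace A]
    (he₁ : ∀ ⦃i k⦄, i ≤ k → e i * e k = e k) (he₂ : ∀ ⦃i k⦄, i ≤ k → e k * e i = e k)
    (he_norm : ∀ k, ‖e k‖ ≤ 1) {a : ℕ → A} (ha : Tendsto a atTop (𝓝 0))
    (hae : ∀ n k, ‖a n * e k‖ ≤ 4⁻¹ ^ k) :
    ∃ (c : A) (b : ℕ → A), HasSum (fun k => (2⁻¹ : 𝕜) ^ (k + 1) • (1 - e k)) c ∧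
      (∀ n, b n ∈ closure (Set.range (a n * ·))) ∧ Tendsto b atTop (𝓝 0) ∧
      ∀ n, a n = b n * c := by
  have h2 : ‖(2 : 𝕜)‖ = 2 := RCLike.norm_two
  have hbound : Summable fun k : ℕ => (2⁻¹ : ℝ) ^ k :=
    summable_geometric_of_lt_one (by norm_num) (by norm_num)
  obtain ⟨s, hs⟩ : Summable fun k => (2⁻¹ : 𝕜) ^ (k + 1) • e k := by
    refine (hbound.mul_right 2⁻¹).of_norm_bounded fun k => ?_
    rw [norm_smul, norm_pow, norm_inv, h2, ← pow_succ]
    exact mul_le_of_le_one_right (by positivity) (he_norm k)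
  have hgeom : HasSum (fun k => (2⁻¹ : 𝕜) ^ (k + 1)) 1 := by
    have h := (hasSum_geometric_of_norm_lt_one (ξ := (2⁻¹ : 𝕜)) (by norm_num)).mul_left 2⁻¹
    rwa [show (2⁻¹ : 𝕜) * (1 - 2⁻¹)⁻¹ = 1 by norm_num, ← funext fun k => pow_succ' _ k] at h
  have hc : HasSum (fun k => (2⁻¹ : 𝕜) ^ (k + 1) • (1 - e k)) (1 - s) := by
    simpa only [smul_sub, one_smul] using (hgeom.smul_const (1 : A)).sub hs
  have hterm : ∀ n k, ‖(2 : 𝕜) ^ k • (a n * e k)‖ ≤ (2⁻¹ : ℝ) ^ k := fun n k => by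
    rw [norm_smul, norm_pow, h2]
    calc (2 : ℝ) ^ k * ‖a n * e k‖ ≤ 2 ^ k * 4⁻¹ ^ k := by gcongr; exact hae n k
      _ = 2⁻¹ ^ k := by rw [← mul_pow]; norm_num
  have ht : ∀ n, HasSum (fun k => (2 : 𝕜) ^ k • (a n * e k))
      (∑' k, (2 : 𝕜) ^ k • (a n * e k)) := fun n =>
    (Summable.of_norm_bounded hbound (hterm n)).hasSum
  set b : ℕ → A := fun n => a n + ∑' k, (2 : 𝕜) ^ k • (a n * e k)
  have hpartial : ∀ n, Tendsto (fun k => a n * (1 + ∑ j ∈ range k, (2 : 𝕜) ^ j • e j)) atTop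
      (𝓝 (b n)) := fun n => by
    simp only [mul_add, mul_one, mul_sum, mul_smul_comm]
    exact tendsto_const_nhds.add (ht n).tendsto_sum_nat
  refine ⟨1 - s, b, hc,
    fun n => mem_closure_of_tendsto (hpartial n) (.of_forall fun k => ⟨_, rfl⟩), ?_, fun n => ?_⟩
  · have htail : Tendsto (fun n => ∑' k, (2 : 𝕜) ^ k • (a n * e k)) atTop
        (𝓝 (∑' _ : ℕ, (0 : A))) :=
      tendsto_tsum_of_dominated_convergence hbound
        (fun k => by simpa using ((ha.mul_const (e k)).const_smul ((2 : 𝕜) ^ k)))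
        (.of_forall hterm)
    simpa using ha.add htail
  · have hlim := (hpartial n).mul (hs.tendsto_sum_nat.const_sub 1)
    simp only [mul_assoc, one_add_sum_two_pow_smul_mul_one_sub_sum_two_inv_pow_smul he₁ he₂,
      mul_one] at hlim
    exact tendsto_nhds_unique tendsto_const_nhds hlim

end Factorization

section Hilbert

variable {𝕜 E F : Type*} [RCLike 𝕜] [NormedAddCommGroup E] [InnerProductSpace 𝕜 E]
  [NormedAddCommGroup F] [InnerProductSpace 𝕜 F]

namespace Submodule

lemma starProjection_comp_starProjection_of_le' {U V : Submodule 𝕜 E}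
    [U.HasOrthogonalProjection] [V.HasOrthogonalProjection] (h : U ≤ V) :
    V.starProjection ∘L U.starProjection = U.starProjection :=
  ContinuousLinearMap.ext fun x =>
    V.starProjection_eq_self_iff.mpr (h (U.starProjection_apply_mem x))

lemma isCompactOperator_starProjection (K : Submodule 𝕜 E) [FiniteDimensional 𝕜 K] :
    IsCompactOperator K.starProjection :=
  (isCompactOperator_of_locallyCompactSpace_dom K.orthogonalProjectionOnto).clm_comp K.subtypeL

lemma norm_comp_starProjection_le (K : Submodule 𝕜 E) [K.HasOrthogonalProjection]
    (T : E →L[𝕜] F) : ‖T ∘L K.starProjection‖ ≤ ‖T‖ :=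
  (T.opNorm_comp_le _).trans (mul_le_of_le_one_right (norm_nonneg T) K.starProjection_norm_le)

lemma norm_comp_starProjection_orthogonal_anti {U V : Submodule 𝕜 E}
    [U.HasOrthogonalProjection] [V.HasOrthogonalProjection] (h : U ≤ V) (T : E →L[𝕜] F) :
    ‖T ∘L Vᗮ.starProjection‖ ≤ ‖T ∘L Uᗮ.starProjection‖ := by
  rw [← starProjection_comp_starProjection_of_le' (orthogonal_le h),
    ← ContinuousLinearMap.comp_assoc]
  exact norm_comp_starProjection_le _ _

end Submodule

open Submodule

lemma IsCompactOperator.exists_norm_starProjection_orthogonal_comp_le {T : E →L[𝕜] F}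
    (hT : IsCompactOperator T) {ε : ℝ} (hε : 0 < ε) :
    ∃ (W : Submodule 𝕜 F) (_ : FiniteDimensional 𝕜 W), ‖Wᗮ.starProjection ∘L T‖ ≤ ε := by
  obtain ⟨K, hK, hTK⟩ := hT.image_closedBall_subset_compact 1
  obtain ⟨t, ht⟩ := hK.elim_nhds_subcover (Metric.ball · ε) fun y _ => Metric.ball_mem_nhds y hε
  refine ⟨span 𝕜 t, inferInstance,
    ContinuousLinearMap.opNorm_le_of_unit_norm hε.le fun x hx => ?_⟩
  obtain ⟨y, hy, hTy⟩ := Set.mem_iUnion₂.mp (ht.2 (hTK ⟨x, by simp [hx], rfl⟩))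
  calc ‖(span 𝕜 t)ᗮ.starProjection (T x)‖
      = ‖(span 𝕜 t)ᗮ.starProjection (T x - y)‖ := by
        rw [map_sub, starProjection_orthogonal_apply_eq_zero (subset_span hy), sub_zero]
    _ ≤ ‖T x - y‖ := norm_starProjection_apply_le _ _
    _ ≤ ε := (mem_ball_iff_norm.mp hTy).le

variable [CompleteSpace E] [CompleteSpace F]

/-- `‖T ∘ P‖² = ‖P ∘ T† T ∘ P‖`, so it suffices to approximate `T† T` from the left. -/
lemma IsCompactOperator.exists_norm_comp_starProjection_orthogonal_le {T : E →L[𝕜] F}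
    (hT : IsCompactOperator T) {ε : ℝ} (hε : 0 < ε) :
    ∃ (W : Submodule 𝕜 E) (_ : FiniteDimensional 𝕜 W), ‖T ∘L Wᗮ.starProjection‖ ≤ ε := by
  have hTT : IsCompactOperator (ContinuousLinearMap.adjoint T ∘L T) :=
    hT.clm_comp (ContinuousLinearMap.adjoint T)
  obtain ⟨W, _, hW⟩ := hTT.exists_norm_starProjection_orthogonal_comp_le (pow_pos hε 2)
  refine ⟨W, inferInstance, ?_⟩
  have hsq : ‖T ∘L Wᗮ.starProjection‖ ^ 2 ≤ ε ^ 2 := calc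
    ‖T ∘L Wᗮ.starProjection‖ ^ 2
        = ‖(Wᗮ.starProjection ∘L (ContinuousLinearMap.adjoint T ∘L T)) ∘L Wᗮ.starProjection‖ := by
      rw [sq, ← ContinuousLinearMap.norm_adjoint_comp_self, ContinuousLinearMap.adjoint_comp,
        (isSelfAdjoint_starProjection Wᗮ).adjoint_eq]
      simp only [ContinuousLinearMap.comp_assoc]
    _ ≤ ‖Wᗮ.starProjection ∘L (ContinuousLinearMap.adjoint T ∘L T)‖ :=
      norm_comp_starProjection_le _ _
    _ ≤ ε ^ 2 := hW
  exact (pow_le_pow_iff_left₀ (norm_nonneg _) hε.le two_ne_zero).mp hsq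

variable {a : ℕ → E →L[𝕜] F}

lemma exists_finiteDimensional_forall_norm_comp_starProjection_orthogonal_le
    (ha : ∀ n, IsCompactOperator (a n)) (ha₀ : Tendsto a atTop (𝓝 0)) {ε : ℝ} (hε : 0 < ε) :
    ∃ (W : Submodule 𝕜 E) (_ : FiniteDimensional 𝕜 W), ∀ n, ‖a n ∘L Wᗮ.starProjection‖ ≤ ε := by
  obtain ⟨N, hN⟩ := eventually_atTop.mp
    ((tendsto_zero_iff_norm_tendsto_zero.mp ha₀).eventually (ge_mem_nhds hε))
  choose V _ hV using fun n => (ha n).exists_norm_comp_starProjection_orthogonal_le hε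
  refine ⟨(range N).sup V, inferInstance, fun n => ?_⟩
  rcases lt_or_ge n N with hn | hn
  · exact (norm_comp_starProjection_orthogonal_anti (le_sup (mem_range.mpr hn)) _).trans (hV n)
  · exact (norm_comp_starProjection_le _ _).trans (hN n hn)

lemma exists_monotone_forall_norm_comp_starProjection_orthogonal_le
    (ha : ∀ n, IsCompactOperator (a n)) (ha₀ : Tendsto a atTop (𝓝 0)) {ε : ℕ → ℝ}
    (hε : ∀ k, 0 < ε k) :
    ∃ (W : ℕ → Submodule 𝕜 E) (_ : ∀ k, FiniteDimensional 𝕜 (W k)), Monotone W ∧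
      ∀ k n, ‖a n ∘L (W k)ᗮ.starProjection‖ ≤ ε k := by
  choose V _ hV using fun k =>
    exists_finiteDimensional_forall_norm_comp_starProjection_orthogonal_le ha ha₀ (hε k)
  have _ : ∀ k, FiniteDimensional 𝕜 (partialSups V k) := fun k => by
    rw [partialSups_eq_sup_range]
    infer_instance
  exact ⟨partialSups V, inferInstance, (partialSups V).monotone, fun k n =>
    (norm_comp_starProjection_orthogonal_anti (le_partialSups V k) _).trans (hV k n)⟩

end Hilbert

open ContinuousLinearMap Filter in
/-- Every null sequence `aₙ` of compact operators on a Hilbert space factors as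
`aₙ = bₙ c` with `c` a fixed compact operator and `bₙ` compact operators with
`‖bₙ‖ → 0`. -/
theorem exists_factorization_of_null_sequence
    {L : Type*} [NormedAddCommGroup L] [InnerProductSpace ℂ L] [CompleteSpace L]
    (a : ℕ → (L →L[ℂ] L)) (ha : ∀ n, IsCompactOperator (a n))
    (hlim : Tendsto (fun n => ‖a n‖) atTop (nhds 0)) :
    ∃ (c : L →L[ℂ] L) (b : ℕ → (L →L[ℂ] L)),
      IsCompactOperator c ∧ (∀ n, IsCompactOperator (b n)) ∧
      Tendsto (fun n => ‖b n‖) atTop (nhds 0) ∧ ∀ n, a n = b n ∘L c := by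
  have ha₀ : Tendsto a atTop (𝓝 0) := tendsto_zero_iff_norm_tendsto_zero.mpr hlim
  obtain ⟨W, _, hW_mono, hW⟩ :=
    exists_monotone_forall_norm_comp_starProjection_orthogonal_le ha ha₀
      (ε := fun k => 4⁻¹ ^ k) fun k => by positivity
  obtain ⟨c, b, hc, hb, hb₀, hab⟩ := exists_mul_eq_of_norm_mul_le_four_inv_pow (𝕜 := ℂ)
    (e := fun k => (W k)ᗮ.starProjection)
    (fun i k hik => Submodule.starProjection_comp_starProjection_of_le'
      (Submodule.orthogonal_le (hW_mono hik)))
    (fun i k hik => Submodule.starProjection_comp_starProjection_of_le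
      (Submodule.orthogonal_le (hW_mono hik)))
    (fun k => Submodule.starProjection_norm_le _) ha₀ fun n k => hW k n
  refine ⟨c, b, IsCompactOperator.of_hasSum hc fun k => ?_, fun n => ?_,
    tendsto_zero_iff_norm_tendsto_zero.mp hb₀, hab⟩
  · rw [Submodule.starProjection_orthogonal', sub_sub_cancel]
    exact (W k).isCompactOperator_starProjection.smul _
  · refine closure_minimal ?_ isClosed_setOfPred_isCompactOperator (hb n)
    rintro _ ⟨x, rfl⟩
    exact (ha n).comp_clm x
end

section
/- Let E and F be quantum spaces and f, g bounded functionals on E and F respectively. Then the bifunctional f × g : E × F → ℂ, (x,y) ↦ f(x)g(y), is strongly completely bounded with ‖f × g‖_scb = ‖f‖·‖g‖. -/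
set_option synthInstance.maxHeartbeats 1000000
set_option maxHeartbeats 1000000

noncomputable section

open ContinuousLinearMap TensorProduct

variable (L : Type*) [NormedAddCommGroup L] [InnerProductSpace ℂ L] [CompleteSpace L]

/-- The space `K = K(L)` of compact operators on `L`, as a `ℂ`-submodule of `B(L)`. -/
def cpt : Submodule ℂ (L →L[ℂ] L) := compactOperator (RingHom.id ℂ) L L

variable {L}

/-- Left multiplication of a compact operator by a bounded operator. -/
def lK (g : L →L[ℂ] L) : cpt L →ₗ[ℂ] cpt L where
  toFun b := ⟨g ∘L (b : L →L[ℂ] L), by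
    exact b.2.clm_comp g⟩
  map_add' b c := by ext : 1; simp [ContinuousLinearMap.comp_add]
  map_smul' m b := by ext : 1; simp [ContinuousLinearMap.comp_smul]

/-- Right multiplication of a compact operator by a bounded operator. -/
def rK (g : L →L[ℂ] L) : cpt L →ₗ[ℂ] cpt L where
  toFun b := ⟨(b : L →L[ℂ] L) ∘L g, by
    exact b.2.comp_clm g⟩
  map_add' b c := by ext : 1; simp [ContinuousLinearMap.add_comp]
  map_smul' m b := by ext : 1; simp [ContinuousLinearMap.smul_comp]

/-- The amplification `KE = K(L) ⊗ E` of a linear space `E`. -/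
abbrev Amp (L : Type*) [NormedAddCommGroup L] [InnerProductSpace ℂ L]
    [CompleteSpace L] (E : Type*) [AddCommGroup E] [Module ℂ E] :=
  TensorProduct ℂ (cpt L) E

variable {E : Type*} [AddCommGroup E] [Module ℂ E]

/-- The left outer multiplication `a · (b ⊗ x) = (ab) ⊗ x` on `KE`. -/
def lAct (g : L →L[ℂ] L) : Amp L E →ₗ[ℂ] Amp L E :=
  TensorProduct.map (lK g) LinearMap.id

/-- The right outer multiplication `(b ⊗ x) · a = (ba) ⊗ x` on `KE`. -/
def rAct (g : L →L[ℂ] L) : Amp L E →ₗ[ℂ] Amp L E :=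
  TensorProduct.map (rK g) LinearMap.id

/-- The amplification `f_∞ = 1_K ⊗ f : KE → K` of a functional `f : E → ℂ`,
with `K ⊗ ℂ` identified with `K ⊆ B(L)`; on elementary tensors,
`f_∞ (a ⊗ x) = f x • a`. -/
def ampFun (f : E →ₗ[ℂ] ℂ) : Amp L E →ₗ[ℂ] (L →L[ℂ] L) :=
  (cpt L).subtype ∘ₗ (TensorProduct.rid ℂ (cpt L)).toLinearMap ∘ₗ
    TensorProduct.map LinearMap.id f

/-- The rank-one operator `ξ ∘ η : ζ ↦ ⟨ζ, η⟩ ξ`. -/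
def rankOne {H : Type*} [NormedAddCommGroup H] [InnerProductSpace ℂ H]
    (ξ η : H) : H →L[ℂ] H :=
  (innerSL ℂ η).smulRight ξ

/-!
Compressing `u ∈ KE` by the rank-one operators `e ∘ ξ` and `η ∘ e` lands in the corner
`p K p ≅ ℂ`: it gives `p ⊗ s`, where the slice `s ∈ E` satisfies `f s = ⟪ξ, f_∞(u) η⟫`, and
by (RI) the norm of `p ⊗ s` is at most `‖ξ‖ ‖η‖ N(u)`. Given `ζ`, put `η = g_∞(v) ζ` and
`ξ = f_∞(u) η`; a bound `C` for `f × g` on the corner then gives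
`‖ξ‖² ‖η‖² ≤ C ‖ξ‖ ‖η‖² ‖ζ‖ N(u) N(v)`, i.e. `‖f_∞(u) g_∞(v) ζ‖ ≤ C N(u) N(v) ‖ζ‖`.
Conversely, on the corner the strong amplification is `f × g` itself, since `p ∘ p = p` and
`‖p‖ = 1`.
-/

section RankOne

variable {H : Type*} [NormedAddCommGroup H] [InnerProductSpace ℂ H]

lemma norm_rankOne (ξ η : H) : ‖rankOne ξ η‖ = ‖η‖ * ‖ξ‖ := by
  rw [rankOne, norm_smulRight_apply, innerSL_apply_norm]

lemma rankOne_comp_comp_rankOne (ξ η ζ θ : H) (a : H →L[ℂ] H) :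
    rankOne ξ η ∘L a ∘L rankOne ζ θ = inner ℂ η (a ζ) • rankOne ξ θ := by
  ext x
  simp [rankOne, smul_smul, mul_comm]

lemma rankOne_comp_rankOne_self {e : H} (he : ‖e‖ = 1) :
    rankOne e e ∘L rankOne e e = rankOne e e := by
  simpa [inner_self_eq_norm_sq_to_K, he] using rankOne_comp_comp_rankOne e e e e (.id ℂ H)

end RankOne

def vectorFun (ξ η : L) : cpt L →ₗ[ℂ] ℂ where
  toFun a := inner ℂ ξ ((a : L →L[ℂ] L) η)
  map_add' a b := by simp
  map_smul' c a := by simp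

def slice (ξ η : L) : Amp L E →ₗ[ℂ] E :=
  (TensorProduct.lid ℂ E).toLinearMap ∘ₗ (vectorFun ξ η).rTensor E

@[simp]
lemma slice_tmul (ξ η : L) (a : cpt L) (x : E) :
    slice ξ η (a ⊗ₜ[ℂ] x) = inner ℂ ξ ((a : L →L[ℂ] L) η) • x := by
  simp [slice, vectorFun]

@[simp]
lemma ampFun_tmul (f : E →ₗ[ℂ] ℂ) (a : cpt L) (x : E) :
    ampFun f (a ⊗ₜ[ℂ] x) = f x • (a : L →L[ℂ] L) := by
  simp [ampFun]

lemma apply_slice (f : E →ₗ[ℂ] ℂ) (ξ η : L) (u : Amp L E) :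
    f (slice ξ η u) = inner ℂ ξ (ampFun f u η) := by
  induction u using TensorProduct.induction_on with
  | zero => simp
  | tmul a x => simp [mul_comm]
  | add u v hu hv => simp [hu, hv]

section Corner

variable {e : L} {p : cpt L}

lemma lAct_rAct_rankOne (hp : (p : L →L[ℂ] L) = rankOne e e) (ξ η : L) (u : Amp L E) :
    lAct (rankOne e ξ) (rAct (rankOne η e) u) = p ⊗ₜ[ℂ] slice ξ η u := by
  induction u using TensorProduct.induction_on with
  | zero => simp
  | tmul a x =>
    have hcorner :
        lK (rankOne e ξ) (rK (rankOne η e) a) = inner ℂ ξ ((a : L →L[ℂ] L) η) • p := by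
      ext1
      simp [lK, rK, hp, rankOne_comp_comp_rankOne]
    simp [lAct, rAct, hcorner, TensorProduct.smul_tmul]
  | add u v hu hv => simp only [map_add, hu, hv, TensorProduct.tmul_add]

lemma norm_tmul_slice_le {N : Amp L E → ℝ}
    (hRI : ∀ (g : L →L[ℂ] L) (u : Amp L E),
      N (lAct g u) ≤ ‖g‖ * N u ∧ N (rAct g u) ≤ ‖g‖ * N u)
    (he : ‖e‖ = 1) (hp : (p : L →L[ℂ] L) = rankOne e e) (ξ η : L) (u : Amp L E) :
    N (p ⊗ₜ[ℂ] slice ξ η u) ≤ ‖ξ‖ * ‖η‖ * N u := by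
  rw [← lAct_rAct_rankOne hp]
  calc N (lAct (rankOne e ξ) (rAct (rankOne η e) u))
      ≤ ‖rankOne e ξ‖ * N (rAct (rankOne η e) u) := (hRI _ _).1
    _ ≤ ‖rankOne e ξ‖ * (‖rankOne η e‖ * N u) := by gcongr; exact (hRI _ _).2
    _ = ‖ξ‖ * ‖η‖ * N u := by rw [norm_rankOne, norm_rankOne, he]; ring

lemma norm_ampFun_tmul_comp_ampFun_tmul {F : Type*} [AddCommGroup F] [Module ℂ F]
    (he : ‖e‖ = 1) (hp : (p : L →L[ℂ] L) = rankOne e e)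
    (f : E →ₗ[ℂ] ℂ) (g : F →ₗ[ℂ] ℂ) (x : E) (y : F) :
    ‖ampFun f (p ⊗ₜ[ℂ] x) ∘L ampFun g (p ⊗ₜ[ℂ] y)‖ = ‖f x * g y‖ := by
  rw [ampFun_tmul, ampFun_tmul, smul_comp, comp_smul, hp, rankOne_comp_rankOne_self he,
    smul_smul, norm_smul, norm_rankOne, he, mul_one, mul_one, mul_comm]

variable {F : Type*} [AddCommGroup F] [Module ℂ F] {NE : Amp L E → ℝ} {NF : Amp L F → ℝ}
  {f : E →ₗ[ℂ] ℂ} {g : F →ₗ[ℂ] ℂ} {C : ℝ}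

lemma norm_inner_ampFun_mul_inner_ampFun_le (hNE0 : ∀ u, 0 ≤ NE u) (hNF0 : ∀ v, 0 ≤ NF v)
    (hRIE : ∀ (g : L →L[ℂ] L) (u : Amp L E),
      NE (lAct g u) ≤ ‖g‖ * NE u ∧ NE (rAct g u) ≤ ‖g‖ * NE u)
    (hRIF : ∀ (g : L →L[ℂ] L) (v : Amp L F),
      NF (lAct g v) ≤ ‖g‖ * NF v ∧ NF (rAct g v) ≤ ‖g‖ * NF v)
    (he : ‖e‖ = 1) (hp : (p : L →L[ℂ] L) = rankOne e e) (hC : 0 ≤ C)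
    (h : ∀ (x : E) (y : F), ‖f x * g y‖ ≤ C * NE (p ⊗ₜ[ℂ] x) * NF (p ⊗ₜ[ℂ] y))
    (ξ η ξ' η' : L) (u : Amp L E) (v : Amp L F) :
    ‖inner ℂ ξ (ampFun f u η) * inner ℂ ξ' (ampFun g v η')‖
      ≤ C * (‖ξ‖ * ‖η‖ * NE u) * (‖ξ'‖ * ‖η'‖ * NF v) := by
  rw [← apply_slice, ← apply_slice]
  refine (h _ _).trans (mul_le_mul ?_ (norm_tmul_slice_le hRIF he hp ξ' η' v) (hNF0 _) ?_)
  · exact mul_le_mul_of_nonneg_left (norm_tmul_slice_le hRIE he hp ξ η u) hC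
  · have := hNE0 u
    positivity

lemma norm_ampFun_comp_apply_le (hNE0 : ∀ u, 0 ≤ NE u) (hNF0 : ∀ v, 0 ≤ NF v)
    (hRIE : ∀ (g : L →L[ℂ] L) (u : Amp L E),
      NE (lAct g u) ≤ ‖g‖ * NE u ∧ NE (rAct g u) ≤ ‖g‖ * NE u)
    (hRIF : ∀ (g : L →L[ℂ] L) (v : Amp L F),
      NF (lAct g v) ≤ ‖g‖ * NF v ∧ NF (rAct g v) ≤ ‖g‖ * NF v)
    (he : ‖e‖ = 1) (hp : (p : L →L[ℂ] L) = rankOne e e) (hC : 0 ≤ C)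
    (h : ∀ (x : E) (y : F), ‖f x * g y‖ ≤ C * NE (p ⊗ₜ[ℂ] x) * NF (p ⊗ₜ[ℂ] y))
    (u : Amp L E) (v : Amp L F) (ζ : L) :
    ‖ampFun f u (ampFun g v ζ)‖ ≤ C * NE u * NF v * ‖ζ‖ := by
  set η := ampFun g v ζ
  set w := ampFun f u η
  rcases eq_or_ne w 0 with hw | hw
  · rw [hw, norm_zero]
    have := hNE0 u
    have := hNF0 v
    positivity
  have hη : η ≠ 0 := fun hη => hw (by simp [w, hη])
  have key := norm_inner_ampFun_mul_inner_ampFun_le hNE0 hNF0 hRIE hRIF he hp hC h w η η ζ u v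
  have norm_inner_self (z : L) : ‖(inner ℂ z z : ℂ)‖ = ‖z‖ ^ 2 := by
    simp [inner_self_eq_norm_sq_to_K]
  change ‖inner ℂ w w * inner ℂ η η‖ ≤ _ at key
  rw [norm_mul, norm_inner_self, norm_inner_self] at key
  refine le_of_mul_le_mul_right ?_ (by positivity : 0 < ‖w‖ * ‖η‖ ^ 2)
  calc ‖w‖ * (‖w‖ * ‖η‖ ^ 2) = ‖w‖ ^ 2 * ‖η‖ ^ 2 := by ring
    _ ≤ C * (‖w‖ * ‖η‖ * NE u) * (‖η‖ * ‖ζ‖ * NF v) := key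
    _ = C * NE u * NF v * ‖ζ‖ * (‖w‖ * ‖η‖ ^ 2) := by ring

end Corner

theorem scb_norm_eq_norm_of_bifunctional_general
    {F : Type*} [AddCommGroup F] [Module ℂ F]
    (NE : Amp L E → ℝ) (NF : Amp L F → ℝ)
    -- `NE` and `NF` are norms on `KE` and `KF`
    (hNE_tri : ∀ u v, NE (u + v) ≤ NE u + NE v)
    (hNE_hom : ∀ (c : ℂ) u, NE (c • u) = ‖c‖ * NE u)
    (hNF_tri : ∀ u v, NF (u + v) ≤ NF u + NF v)
    (hNF_hom : ∀ (c : ℂ) u, NF (c • u) = ‖c‖ * NF u)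
    -- the first axiom of Ruan (RI) for both spaces
    (hRIE : ∀ (g : L →L[ℂ] L) (u : Amp L E),
      NE (lAct g u) ≤ ‖g‖ * NE u ∧ NE (rAct g u) ≤ ‖g‖ * NE u)
    (hRIF : ∀ (g : L →L[ℂ] L) (v : Amp L F),
      NF (lAct g v) ≤ ‖g‖ * NF v ∧ NF (rAct g v) ≤ ‖g‖ * NF v)
    -- a rank-one projection `p = e ∘ e`
    (e : L) (he : ‖e‖ = 1) (p : cpt L) (hp : (p : L →L[ℂ] L) = rankOne e e)
    -- the functionals and a constant
    (f : E →ₗ[ℂ] ℂ) (g : F →ₗ[ℂ] ℂ) (C : ℝ) (hC : 0 ≤ C) :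
    (∀ (x : E) (y : F), ‖f x * g y‖ ≤ C * NE (p ⊗ₜ[ℂ] x) * NF (p ⊗ₜ[ℂ] y)) ↔
      (∀ (u : Amp L E) (v : Amp L F),
        ‖ampFun f u ∘L ampFun g v‖ ≤ C * NE u * NF v) := by
  have hNE0 : ∀ u, 0 ≤ NE u := apply_nonneg (Seminorm.of NE hNE_tri hNE_hom)
  have hNF0 : ∀ v, 0 ≤ NF v := apply_nonneg (Seminorm.of NF hNF_tri hNF_hom)
  constructor
  · intro h u v
    refine opNorm_le_bound _ (mul_nonneg (mul_nonneg hC (hNE0 u)) (hNF0 v)) fun ζ => ?_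
    exact norm_ampFun_comp_apply_le hNE0 hNF0 hRIE hRIF he hp hC h u v ζ
  · intro h x y
    rw [← norm_ampFun_tmul_comp_ampFun_tmul he hp]
    exact h _ _

/-- Proposition 9: for bounded functionals `f`, `g` on quantum spaces `E`, `F`, the
bifunctional `f × g : (x, y) ↦ f(x) g(y)` is strongly completely bounded with
`‖f × g‖_scb = ‖f‖ ‖g‖`.  The strong amplification acts on elementary tensors by
`(a ⊗ x, b ⊗ y) ↦ f(x) g(y) • (a b)`, i.e. `(u, v) ↦ f_∞(u) ∘ g_∞(v)`; the equality
of norms is expressed by saying that a constant `C ≥ 0` bounds the bifunctional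
`f × g` on the underlying spaces iff it bounds its strong amplification. -/
theorem scb_norm_eq_norm_of_bifunctional
    {F : Type*} [AddCommGroup F] [Module ℂ F]
    (NE : Amp L E → ℝ) (NF : Amp L F → ℝ)
    -- `NE` and `NF` are norms on `KE` and `KF`
    (hNE_tri : ∀ u v, NE (u + v) ≤ NE u + NE v)
    (hNE_hom : ∀ (c : ℂ) u, NE (c • u) = ‖c‖ * NE u)
    (hNE_def : ∀ u, NE u = 0 → u = 0)
    (hNF_tri : ∀ u v, NF (u + v) ≤ NF u + NF v)
    (hNF_hom : ∀ (c : ℂ) u, NF (c • u) = ‖c‖ * NF u)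
    (hNF_def : ∀ u, NF u = 0 → u = 0)
    -- the first axiom of Ruan (RI) for both spaces
    (hRIE : ∀ (g : L →L[ℂ] L) (u : Amp L E),
      NE (lAct g u) ≤ ‖g‖ * NE u ∧ NE (rAct g u) ≤ ‖g‖ * NE u)
    (hRIF : ∀ (g : L →L[ℂ] L) (v : Amp L F),
      NF (lAct g v) ≤ ‖g‖ * NF v ∧ NF (rAct g v) ≤ ‖g‖ * NF v)
    -- the second axiom of Ruan (RII) for both spaces
    (hRIIE : ∀ (u v : Amp L E) (P Q : L →L[ℂ] L),
      P ∘L P = P → adjoint P = P → Q ∘L Q = Q → adjoint Q = Q → P ∘L Q = 0 →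
      lAct P u = u → rAct P u = u → lAct Q v = v → rAct Q v = v →
      NE (u + v) = max (NE u) (NE v))
    (hRIIF : ∀ (u v : Amp L F) (P Q : L →L[ℂ] L),
      P ∘L P = P → adjoint P = P → Q ∘L Q = Q → adjoint Q = Q → P ∘L Q = 0 →
      lAct P u = u → rAct P u = u → lAct Q v = v → rAct Q v = v →
      NF (u + v) = max (NF u) (NF v))
    -- a rank-one projection `p = e ∘ e`
    (e : L) (he : ‖e‖ = 1) (p : cpt L) (hp : (p : L →L[ℂ] L) = rankOne e e)
    -- the functionals and a constant
    (f : E →ₗ[ℂ] ℂ) (g : F →ₗ[ℂ] ℂ) (C : ℝ) (hC : 0 ≤ C) :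
    (∀ (x : E) (y : F), ‖f x * g y‖ ≤ C * NE (p ⊗ₜ[ℂ] x) * NF (p ⊗ₜ[ℂ] y)) ↔
      (∀ (u : Amp L E) (v : Amp L F),
        ‖ampFun f u ∘L ampFun g v‖ ≤ C * NE u * NF v) :=
  scb_norm_eq_norm_of_bifunctional_general NE NF hNE_tri hNE_hom hNF_tri hNF_hom hRIE hRIF e he p hp
    f g C hC

end
end

section
/- Let π : K ⊗_B K → K be the product map a ⊗_B b ↦ ab, where K = K(L) is the algebra of compact operators on a Hilbert space L, and the module tensor product is over B = B(L). Then π is injective (hence a linear isomorphism onto K, since every compact operator factors as a product of two compacts). -/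
set_option synthInstance.maxHeartbeats 1000000
set_option maxHeartbeats 1000000

noncomputable section

open ContinuousLinearMap TensorProduct

variable (L : Type*) [NormedAddCommGroup L] [InnerProductSpace ℂ L] [CompleteSpace L]

variable {L}

/-- Multiplication `K × K → K` as a bilinear map. -/
def mulBil : cpt L →ₗ[ℂ] cpt L →ₗ[ℂ] cpt L :=
  LinearMap.mk₂ ℂ (fun a b => rK (b : L →L[ℂ] L) a)
    (fun a a' b => by ext : 1; simp [rK, ContinuousLinearMap.add_comp])
    (fun c a b => by ext : 1; simp [rK, ContinuousLinearMap.smul_comp])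
    (fun a b b' => by ext : 1; simp [rK, ContinuousLinearMap.comp_add])
    (fun c a b => by ext : 1; simp [rK, ContinuousLinearMap.comp_smul])

/-- The product map `π : K ⊗ K → K`, `a ⊗ b ↦ a b`. -/
def prodMap : TensorProduct ℂ (cpt L) (cpt L) →ₗ[ℂ] cpt L :=
  TensorProduct.lift mulBil

/-- The submodule of relations defining the module tensor product `K ⊗_B K`:
it is spanned by the elements `(a · b') ⊗ b − a ⊗ (b' · b)` with `a, b ∈ K`,
`b' ∈ B(L)`. -/
def relB : Submodule ℂ (TensorProduct ℂ (cpt L) (cpt L)) :=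
  Submodule.span ℂ
    {z | ∃ (a b : cpt L) (b' : L →L[ℂ] L),
      z = (rK b' a) ⊗ₜ[ℂ] b - a ⊗ₜ[ℂ] (lK b' b)}

end

/-!
If `∑ aᵢ ⊗ bᵢ` lies in the kernel of the product map, factor all `aᵢ = c dᵢ` through a single
compact `c`. The balancing relations turn the sum into `c ⊗ s` with `s = ∑ dᵢ bᵢ` and `c s = 0`;
then `c ⊗ s = c ⊗ p s ≡ c p ⊗ s = 0` for the orthogonal projection `p` onto `ker c`.

The common factor is `c = (∑ aᵢ aᵢ*)^{1/4}`. In a C⋆-algebra, `x x* ≤ b⁴` gives `x = b d` with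
`d = lim g_ρ(b) x` as `ρ → 0`, where `g_ρ(s) = s / (s² + ρ²)`: the limit exists in norm because
`‖h(b) x‖ ≤ sup_{s ∈ σ(b)} |s² h(s)|`.
-/

open Filter Topology TensorProduct

section CStarAlgebra

variable {A : Type*} [CStarAlgebra A] [PartialOrder A] [StarOrderedRing A]

lemma norm_cfc_mul_le_of_mul_star_le {b x : A} (hb : IsSelfAdjoint b) (hx : x * star x ≤ b ^ 4)
    {h : ℝ → ℝ} (hh : ContinuousOn h (spectrum ℝ b)) {C : ℝ} (hC₀ : 0 ≤ C)
    (hC : ∀ s ∈ spectrum ℝ b, |s ^ 2 * h s| ≤ C) : ‖cfc h b * x‖ ≤ C := by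
  have hsa : IsSelfAdjoint (cfc h b) := cfc_predicate h b
  have hconj : cfc h b * b ^ 4 * star (cfc h b) = cfc (fun s => (s ^ 2 * h s) ^ 2) b := by
    rw [hsa.star_eq, ← cfc_pow_id (R := ℝ) b 4, ← cfc_mul h _ b, ← cfc_mul _ h b]
    exact cfc_congr fun s _ => by ring
  have hsq : ‖cfc h b * x‖ ^ 2 ≤ C ^ 2 := calc
    ‖cfc h b * x‖ ^ 2 = ‖cfc h b * (x * star x) * star (cfc h b)‖ := by
      rw [sq, ← CStarRing.norm_self_mul_star, star_mul, mul_assoc, mul_assoc, mul_assoc]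
    _ ≤ ‖cfc h b * b ^ 4 * star (cfc h b)‖ :=
      CStarAlgebra.norm_le_norm_of_nonneg_of_le
        (star_right_conjugate_nonneg (mul_star_self_nonneg x) _)
        (star_right_conjugate_le_conjugate hx _)
    _ ≤ C ^ 2 := hconj ▸ norm_cfc_le (by positivity) fun s hs => by
      rw [Real.norm_eq_abs, abs_pow]
      exact pow_le_pow_left₀ (abs_nonneg _) (hC s hs) 2
  exact (pow_le_pow_iff_left₀ (norm_nonneg _) hC₀ two_ne_zero).1 hsq

lemma abs_sq_mul_div_sq_add_sq_sub_le (s : ℝ) {r : ℝ} (hr : 0 < r) :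
    |s ^ 2 * (s / (s ^ 2 + r ^ 2)) - s| ≤ r := by
  have hden : 0 < s ^ 2 + r ^ 2 := by positivity
  rw [show s ^ 2 * (s / (s ^ 2 + r ^ 2)) - s = -(s * r ^ 2 / (s ^ 2 + r ^ 2)) by
    field_simp; ring, abs_neg, abs_div, abs_mul, abs_of_pos hden, abs_of_nonneg (sq_nonneg r),
    div_le_iff₀ hden]
  nlinarith [sq_nonneg (|s| - r), sq_abs s, abs_nonneg s]

lemma abs_sq_mul_mul_div_sq_add_sq_sub_one_le (s : ℝ) {r : ℝ} (hr : 0 < r) :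
    |s ^ 2 * (s * (s / (s ^ 2 + r ^ 2)) - 1)| ≤ r ^ 2 := by
  have hden : 0 < s ^ 2 + r ^ 2 := by positivity
  rw [show s ^ 2 * (s * (s / (s ^ 2 + r ^ 2)) - 1) = -(s ^ 2 * r ^ 2 / (s ^ 2 + r ^ 2)) by
    field_simp; ring, abs_neg, abs_of_nonneg (by positivity), div_le_iff₀ hden]
  nlinarith [sq_nonneg s, sq_nonneg r, mul_nonneg (sq_nonneg s) (sq_nonneg r)]

lemma exists_eq_mul_of_mul_star_le_pow_four {b x : A} (hb : IsSelfAdjoint b)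
    (hx : x * star x ≤ b ^ 4) : ∃ d ∈ closure (Set.range (· * x)), x = b * d := by
  let g : ℝ → ℝ → ℝ := fun r s => s / (s ^ 2 + r ^ 2)
  let ρ : ℕ → ℝ := fun n => 1 / ((n : ℝ) + 1)
  have hρ_pos (n : ℕ) : 0 < ρ n := by positivity
  have hρ_lim : Tendsto ρ atTop (𝓝 0) := tendsto_one_div_add_atTop_nhds_zero_nat
  have hg_cont (n : ℕ) : Continuous (g (ρ n)) :=
    continuous_id.div (by fun_prop) fun s => (by positivity : 0 < s ^ 2 + ρ n ^ 2).ne'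
  let u : ℕ → A := fun n => cfc (g (ρ n)) b * x
  have hu_dist (n m : ℕ) : dist (u n) (u m) ≤ ρ n + ρ m := by
    rw [dist_eq_norm, ← sub_mul, ← cfc_sub _ _ b]
    refine norm_cfc_mul_le_of_mul_star_le hb hx (by fun_prop) (by positivity) fun s _ => ?_
    calc |s ^ 2 * (g (ρ n) s - g (ρ m) s)|
        = |(s ^ 2 * g (ρ n) s - s) - (s ^ 2 * g (ρ m) s - s)| := by ring_nf
      _ ≤ ρ n + ρ m := (abs_sub _ _).trans <| add_le_add
          (abs_sq_mul_div_sq_add_sq_sub_le s (hρ_pos n))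
          (abs_sq_mul_div_sq_add_sq_sub_le s (hρ_pos m))
  have hu_cauchy : CauchySeq u := by
    refine cauchySeq_of_le_tendsto_0' (fun n => 2 * ρ n) (fun n m hnm => ?_)
      (by simpa using hρ_lim.const_mul 2)
    have : ρ m ≤ ρ n := one_div_le_one_div_of_le (by positivity) (by gcongr)
    linarith [hu_dist n m]
  obtain ⟨d, hd⟩ := cauchySeq_tendsto_of_complete hu_cauchy
  refine ⟨d, mem_closure_of_tendsto hd (Eventually.of_forall fun n => ⟨_, rfl⟩), ?_⟩
  have hbu_dist (n : ℕ) : ‖b * u n - x‖ ≤ ρ n ^ 2 := by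
    have hbu : b * u n - x = cfc (fun s => s * g (ρ n) s - 1) b * x := by
      rw [cfc_sub _ _ b, cfc_mul _ _ b, cfc_id' ℝ b, cfc_const_one ℝ b, sub_mul, one_mul,
        mul_assoc]
    rw [hbu]
    exact norm_cfc_mul_le_of_mul_star_le hb hx (by fun_prop) (by positivity) fun s _ =>
      abs_sq_mul_mul_div_sq_add_sq_sub_one_le s (hρ_pos n)
  have hbu : Tendsto (fun n => b * u n) atTop (𝓝 x) := by
    rw [tendsto_iff_norm_sub_tendsto_zero]
    exact squeeze_zero (fun _ => norm_nonneg _) hbu_dist (by simpa using hρ_lim.pow 2)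
  exact tendsto_nhds_unique hbu (hd.const_mul b)

end CStarAlgebra

section CompactOperator

variable {L : Type*} [NormedAddCommGroup L] [InnerProductSpace ℂ L]

@[simp] lemma coe_rK (g : L →L[ℂ] L) (b : cpt L) : (rK g b : L →L[ℂ] L) = b * g := rfl

@[simp] lemma coe_lK (g : L →L[ℂ] L) (b : cpt L) : (lK g b : L →L[ℂ] L) = g * b := rfl

@[simp] lemma coe_prodMap_tmul (a b : cpt L) :
    (prodMap (a ⊗ₜ[ℂ] b) : L →L[ℂ] L) = a * b := rfl

lemma rK_tmul_sub_tmul_lK_mem_relB (g : L →L[ℂ] L) (a b : cpt L) :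
    rK g a ⊗ₜ[ℂ] b - a ⊗ₜ[ℂ] lK g b ∈ relB :=
  Submodule.subset_span ⟨a, b, g, rfl⟩

lemma sum_rK_tmul_sub_tmul_sum_lK_mem_relB {ι : Type*} (s : Finset ι) (c : cpt L)
    (d : ι → L →L[ℂ] L) (b : ι → cpt L) :
    ∑ i ∈ s, rK (d i) c ⊗ₜ[ℂ] b i - c ⊗ₜ[ℂ] ∑ i ∈ s, lK (d i) (b i) ∈ relB := by
  rw [tmul_sum, ← Finset.sum_sub_distrib (fun i => rK (d i) c ⊗ₜ[ℂ] b i)]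
  exact Submodule.sum_mem _ fun i _ => rK_tmul_sub_tmul_lK_mem_relB _ _ _

lemma relB_le_ker_prodMap : relB (L := L) ≤ LinearMap.ker prodMap := by
  refine Submodule.span_le.2 ?_
  rintro _ ⟨a, b, g, rfl⟩
  simp only [SetLike.mem_coe, LinearMap.mem_ker, map_sub, sub_eq_zero]
  ext1
  simp [mul_assoc]

variable [CompleteSpace L]

lemma IsCompactOperator.cfcₙ {a : L →L[ℂ] L} (hc : IsCompactOperator a) (ha : IsSelfAdjoint a)
    (f : ℝ → ℝ) : IsCompactOperator (cfcₙ f a : L →L[ℂ] L) := by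
  have hadjoin : (NonUnitalStarAlgebra.adjoin ℝ {a} : Set (L →L[ℂ] L)) ⊆
      {y | IsCompactOperator (y : L →L[ℂ] L)} := by
    intro y hy
    replace hy : y ∈ NonUnitalAlgebra.adjoin ℝ ({a} ∪ star {a}) := hy
    rw [Set.star_singleton, ha.star_eq, Set.union_self] at hy
    induction hy using NonUnitalAlgebra.adjoin_induction with
    | mem y hy => exact (Set.mem_singleton_iff.1 hy) ▸ hc
    | add y z _ _ hy hz => exact hy.add hz
    | zero => exact isCompactOperator_zero
    | mul y z _ _ hy _ => exact hy.comp_clm z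
    | smul r y _ hy => exact hy.smul (r : ℂ)
  exact closure_minimal hadjoin isClosed_setOfPred_isCompactOperator (cfcₙ_mem_elemental f a)

lemma IsCompactOperator.sqrt {a : L →L[ℂ] L} (hc : IsCompactOperator a) (ha : 0 ≤ a) :
    IsCompactOperator (CFC.sqrt a : L →L[ℂ] L) := by
  rw [CFC.sqrt_eq_real_sqrt a ha]
  exact hc.cfcₙ ha.isSelfAdjoint _

lemma exists_cpt_mul_eq {ι : Type*} [Fintype ι] (a : ι → cpt L) :
    ∃ (c : cpt L) (d : ι → cpt L), ∀ i, (a i : L →L[ℂ] L) = c * d i := by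
  set s : L →L[ℂ] L := ∑ i, a i * star (a i : L →L[ℂ] L)
  have hs : 0 ≤ s := Finset.sum_nonneg fun i _ => mul_star_self_nonneg _
  have hs_cpt : IsCompactOperator s := (cpt L).sum_mem fun i _ => (a i).2.comp_clm _
  set c := CFC.sqrt (CFC.sqrt s)
  have hc4 : c ^ 4 = s := by
    rw [show 4 = 2 * 2 from rfl, pow_mul, CFC.sq_sqrt _ (CFC.sqrt_nonneg _), CFC.sq_sqrt _ hs]
  have hle (i : ι) : a i * star (a i : L →L[ℂ] L) ≤ c ^ 4 :=
    hc4 ▸ Finset.single_le_sum (f := fun j => a j * star (a j : L →L[ℂ] L))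
      (fun j _ => mul_star_self_nonneg _) (Finset.mem_univ i)
  choose d hd had using fun i =>
    exists_eq_mul_of_mul_star_le_pow_four (CFC.sqrt_nonneg _).isSelfAdjoint (hle i)
  have hd_cpt (i : ι) : IsCompactOperator (d i) := by
    refine closure_minimal ?_ isClosed_setOfPred_isCompactOperator (hd i)
    rintro _ ⟨y, rfl⟩
    exact (a i).2.clm_comp y
  exact ⟨⟨c, (hs_cpt.sqrt hs).sqrt (CFC.sqrt_nonneg _)⟩, fun i => ⟨d i, hd_cpt i⟩, had⟩

lemma tmul_mem_relB_of_mul_eq_zero {c s : cpt L} (h : (c : L →L[ℂ] L) * s = 0) :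
    c ⊗ₜ[ℂ] s ∈ relB := by
  let K := LinearMap.ker ((c : L →L[ℂ] L) : L →ₗ[ℂ] L)
  have : CompleteSpace K := (ContinuousLinearMap.isClosed_ker (c : L →L[ℂ] L)).completeSpace_coe
  have hcp : rK K.starProjection c = 0 := by
    ext ξ
    exact K.starProjection_apply_mem ξ
  have hps : lK K.starProjection s = s := by
    ext ξ
    exact K.starProjection_eq_self_iff.2 (DFunLike.congr_fun h ξ)
  have hcs : c ⊗ₜ[ℂ] s =
      (-1 : ℂ) • (rK K.starProjection c ⊗ₜ[ℂ] s - c ⊗ₜ[ℂ] lK K.starProjection s) := by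
    rw [hcp, hps, zero_tmul]
    module
  rw [hcs]
  exact relB.smul_mem _ (rK_tmul_sub_tmul_lK_mem_relB _ _ _)

lemma ker_prodMap_le_relB : LinearMap.ker prodMap ≤ relB (L := L) := by
  intro t ht
  obtain ⟨S, rfl⟩ := TensorProduct.exists_finset t
  obtain ⟨c, d, had⟩ := exists_cpt_mul_eq fun p : S => p.1.1
  have hsum : ∑ p ∈ S, p.1 ⊗ₜ[ℂ] p.2 = ∑ p : S, rK (d p) c ⊗ₜ[ℂ] p.1.2 := by
    rw [← Finset.sum_coe_sort]
    exact Finset.sum_congr rfl fun p _ => congrArg (· ⊗ₜ[ℂ] p.1.2) (Subtype.ext (had p))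
  set s : cpt L := ∑ p : S, lK (d p) p.1.2
  have hcs : (c : L →L[ℂ] L) * s = 0 := by
    rw [LinearMap.mem_ker, hsum] at ht
    simpa [s, Finset.mul_sum, mul_assoc] using congrArg Subtype.val ht
  rw [hsum]
  have h := Submodule.add_mem _
    (sum_rK_tmul_sub_tmul_sum_lK_mem_relB .univ c (fun p => d p) fun p => p.1.2)
    (tmul_mem_relB_of_mul_eq_zero hcs)
  rwa [sub_add_cancel] at h

lemma prodMap_surjective : Function.Surjective (prodMap (L := L)) := by
  intro a
  obtain ⟨c, d, had⟩ := exists_cpt_mul_eq fun _ : Unit => a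
  exact ⟨c ⊗ₜ[ℂ] d (), Subtype.ext (had ()).symm⟩

/-- Theorem (part of Theorem 3): the product map
`π : K ⊗_B K → K : a ⊗_B b ↦ a b`, defined on the module tensor product over
`B = B(L)` — that is, on the quotient of `K ⊗ K` by the balancing relations
`relB` — is injective, and indeed a linear isomorphism onto `K` (every compact
operator being a product of two compact operators).  Equivalently: the kernel
of the product map `K ⊗ K → K` is exactly the relation submodule `relB`, and
the product map is surjective. -/
theorem prodMap_bijective
    {L : Type*} [NormedAddCommGroup L] [InnerProductSpace ℂ L] [CompleteSpace L] :
    LinearMap.ker (prodMap (L := L)) = relB (L := L) ∧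
      Function.Surjective (prodMap (L := L)) :=
  ⟨le_antisymm ker_prodMap_le_relB relB_le_ker_prodMap, prodMap_surjective⟩

end CompactOperator
end
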